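/- Realize the root system Φ of type D₄ concretely as Φ = {±eᵢ ± eⱼ : 1 ≤ i < j ≤ 4} ⊂ ℚ⁴ with the standard inner product ⟨·,·⟩, let δ = e₁ + e₂, Φ₀ = {α ∈ Φ : ⟨α, δ⟩ = 0}, Φ₁ = {α ∈ Φ : ⟨α, δ⟩ = 1}, and let W₀ be the group generated by the reflections s_α for α ∈ Φ₀. Then the action of W₀ on the collection of 2-element subsets {α, β} ⊆ Φ₁ with ⟨α, β⟩ = 0 has exactly three orbits. -/

import Mathlib

/-- The standard inner product on `ℚˡ`. -/
def ip {l : ℕ} (x y : Fin l → ℚ) : ℚ := ∑ i, x i * y i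

/-- The standard basis vector `eᵢ` of `ℚˡ`. -/
def ev {l : ℕ} (i : Fin l) : Fin l → ℚ := Pi.single i 1

/-- The root system of type `D_l`: `Φ = {±eᵢ ± eⱼ : i < j}`. -/
def PhiD (l : ℕ) : Set (Fin l → ℚ) :=
  {α | ∃ i j : Fin l, i < j ∧
    (α = ev i + ev j ∨ α = ev i - ev j ∨ α = -ev i + ev j ∨ α = -ev i - ev j)}

/-- The maximal root `δ = e₁ + e₂` of `D_l`. -/
def deltaD (l : ℕ) (hl : 4 ≤ l) : Fin l → ℚ :=
  ev ⟨0, by omega⟩ + ev ⟨1, by omega⟩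

/-- The roots orthogonal to `δ`. -/
def Phi0D (l : ℕ) (hl : 4 ≤ l) : Set (Fin l → ℚ) :=
  {α ∈ PhiD l | ip α (deltaD l hl) = 0}

/-- The roots with `⟨α, δ⟩ = 1`. -/
def Phi1D (l : ℕ) (hl : 4 ≤ l) : Set (Fin l → ℚ) :=
  {α ∈ PhiD l | ip α (deltaD l hl) = 1}

/-- The group `W₀` generated by the reflections `s_α`, `α ∈ Φ₀`. -/
def W0D (l : ℕ) (hl : 4 ≤ l) : Subgroup ((Fin l → ℚ) ≃ₗ[ℚ] (Fin l → ℚ)) :=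
  Subgroup.closure
    {g | ∃ α ∈ Phi0D l hl, ∀ x, g x = x - (2 * ip x α / ip α α) • α}

/-- The collection of 2-element subsets of `Φ₁` consisting of orthogonal roots. -/
def OrthPairsD (l : ℕ) (hl : 4 ≤ l) : Set (Set (Fin l → ℚ)) :=
  {S | S ⊆ Phi1D l hl ∧ S.ncard = 2 ∧ ∀ α ∈ S, ∀ β ∈ S, α ≠ β → ip α β = 0}

/-- `S` and `T` lie in the same `W₀`-orbit (elementwise action on subsets). -/
def SameW0OrbitD (l : ℕ) (hl : 4 ≤ l) (S T : Set (Fin l → ℚ)) : Prop :=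
  ∃ w ∈ W0D l hl, (fun x => w x) '' S = T


/-!
Φ₁ consists of the eight roots `e_{1+a} ± e_{3+k}` (`a, k ∈ {0, 1}`), and W₀ consists of the
eight signed permutations generated by the reflections in `e₁ - e₂`, `e₃ - e₄` and `e₃ + e₄`:
swap the first two coordinates, swap the last two, swap the last two and negate them. Labelling
both by `(ℤ/2)³`, W₀ acts on Φ₁ by translation, so the orbit of a pair `{x, y}` is determined by
`x + y` alone. The pair is orthogonal exactly when `x + y` is one of `(0,0,1)`, `(1,1,0)`,
`(1,1,1)`, which gives the three orbits.
-/

abbrev Label := ZMod 2 × ZMod 2 × ZMod 2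

def rootReflection {l : ℕ} (α x : Fin l → ℚ) : Fin l → ℚ := x - (2 * ip x α / ip α α) • α

def phi1Root (x : Label) : Fin 4 → ℚ :=
  if x.2.2 = 0 then ev (if x.1 = 0 then 0 else 1) + ev (if x.2.1 = 0 then 2 else 3)
  else ev (if x.1 = 0 then 0 else 1) - ev (if x.2.1 = 0 then 2 else 3)

def signedSwap (g : Label) : (Fin 4 → ℚ) ≃ₗ[ℚ] (Fin 4 → ℚ) :=
  LinearEquiv.ofInvolutive
    { toFun := fun x => ![x (if g.1 = 0 then 0 else 1), x (if g.1 = 0 then 1 else 0),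
        (if g.2.2 = 0 then 1 else -1) * x (if g.2.1 = 0 then 2 else 3),
        (if g.2.2 = 0 then 1 else -1) * x (if g.2.1 = 0 then 3 else 2)]
      map_add' := fun x y => by ext i; fin_cases i <;> simp [mul_add]
      map_smul' := fun r x => by ext i; fin_cases i <;> simp [mul_left_comm] }
    (fun x => by ext i; fin_cases i <;> split_ifs <;> simp)

def orthogonalSums : Finset Label := {(0, 0, 1), (1, 1, 0), (1, 1, 1)}

lemma ip_comm {l : ℕ} (x y : Fin l → ℚ) : ip x y = ip y x := by
  simp only [ip, mul_comm]

lemma ip_deltaD {l : ℕ} (hl : 4 ≤ l) (x : Fin l → ℚ) :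
    ip x (deltaD l hl) = x ⟨0, by omega⟩ + x ⟨1, by omega⟩ := by
  simp [ip, deltaD, ev, mul_add, Finset.sum_add_distrib, Pi.single_apply]

lemma ip_four (x y : Fin 4 → ℚ) : ip x y = x 0 * y 0 + x 1 * y 1 + x 2 * y 2 + x 3 * y 3 := by
  simp [ip, Fin.sum_univ_four]

lemma rootReflection_neg {l : ℕ} (α : Fin l → ℚ) : rootReflection (-α) = rootReflection α := by
  ext x i
  simp [rootReflection, ip, neg_div]

lemma signedSwap_zero : signedSwap 0 = 1 := by
  ext x i
  fin_cases i <;> simp [signedSwap]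

lemma signedSwap_add (g h : Label) : signedSwap (g + h) = signedSwap g * signedSwap h := by
  ext x i
  fin_cases g <;> fin_cases h <;> fin_cases i <;> simp +decide [signedSwap]

lemma ip_signedSwap (g : Label) (x y : Fin 4 → ℚ) :
    ip (signedSwap g x) (signedSwap g y) = ip x y := by
  fin_cases g <;> simp +decide [signedSwap, ip_four] <;> ring

lemma signedSwap_apply_phi1Root (g x : Label) :
    signedSwap g (phi1Root x) = phi1Root (x + g) := by
  fin_cases g <;> fin_cases x <;> ext i <;> fin_cases i <;> simp +decide [signedSwap, phi1Root, ev]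

lemma phi1Root_injective : Function.Injective phi1Root := by
  intro x y h
  fin_cases x <;> fin_cases y <;>
    simp +decide [phi1Root, ev, funext_iff, Fin.forall_fin_succ, Pi.single_apply] at h ⊢

lemma mem_Phi1D_four_iff {α : Fin 4 → ℚ} : α ∈ Phi1D 4 (le_refl 4) ↔ ∃ x, phi1Root x = α := by
  constructor
  · rintro ⟨⟨i, j, hij, hα⟩, hδ⟩
    fin_cases i <;> fin_cases j <;> try exact absurd hij (by decide)
    all_goals rcases hα with rfl | rfl | rfl | rfl <;>
      norm_num [ip_deltaD, ev, Pi.single_apply] at hδ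
    -- the roots left are `e₁ ± e₃, e₁ ± e₄, e₂ ± e₃, e₂ ± e₄`
    exacts [⟨(0, 0, 0), rfl⟩, ⟨(0, 0, 1), rfl⟩, ⟨(0, 1, 0), rfl⟩, ⟨(0, 1, 1), rfl⟩,
      ⟨(1, 0, 0), rfl⟩, ⟨(1, 0, 1), rfl⟩, ⟨(1, 1, 0), rfl⟩, ⟨(1, 1, 1), rfl⟩]
  · rintro ⟨x, rfl⟩
    refine ⟨⟨if x.1 = 0 then 0 else 1, if x.2.1 = 0 then 2 else 3, by split_ifs <;> decide, ?_⟩,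
      ?_⟩
    · unfold phi1Root
      split_ifs <;> simp
    · fin_cases x <;> simp +decide [phi1Root, ip_deltaD, ev]

lemma signedSwap_eq_rootReflection_sub_zero_one :
    ⇑(signedSwap (1, 0, 0)) = rootReflection (ev 0 - ev 1) := by
  ext x k
  fin_cases k <;> simp [rootReflection, signedSwap, ip_four, ev] <;> ring

lemma signedSwap_eq_rootReflection_sub_two_three :
    ⇑(signedSwap (0, 1, 0)) = rootReflection (ev 2 - ev 3) := by
  ext x k
  fin_cases k <;> simp [rootReflection, signedSwap, ip_four, ev] <;> ring

lemma signedSwap_eq_rootReflection_add_two_three :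
    ⇑(signedSwap (0, 1, 1)) = rootReflection (ev 2 + ev 3) := by
  ext x k
  fin_cases k <;> simp [rootReflection, signedSwap, ip_four, ev] <;> ring

lemma exists_signedSwap_eq_rootReflection {α : Fin 4 → ℚ} (hα : α ∈ Phi0D 4 (le_refl 4)) :
    ∃ g, ⇑(signedSwap g) = rootReflection α := by
  obtain ⟨⟨i, j, hij, hα⟩, hδ⟩ := hα
  fin_cases i <;> fin_cases j <;> try exact absurd hij (by decide)
  all_goals rcases hα with rfl | rfl | rfl | rfl <;>
    norm_num [ip_deltaD, ev, Pi.single_apply] at hδ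
  -- the roots left are `e₁ - e₂, -e₁ + e₂, e₃ + e₄, e₃ - e₄, -e₃ + e₄, -e₃ - e₄`
  exacts [⟨_, signedSwap_eq_rootReflection_sub_zero_one⟩,
    ⟨_, signedSwap_eq_rootReflection_sub_zero_one.trans
      (by rw [← rootReflection_neg, neg_sub, neg_add_eq_sub]; rfl)⟩,
    ⟨_, signedSwap_eq_rootReflection_add_two_three⟩,
    ⟨_, signedSwap_eq_rootReflection_sub_two_three⟩,
    ⟨_, signedSwap_eq_rootReflection_sub_two_three.trans
      (by rw [← rootReflection_neg, neg_sub, neg_add_eq_sub]; rfl)⟩,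
    ⟨_, signedSwap_eq_rootReflection_add_two_three.trans
      (by rw [← rootReflection_neg, neg_add']; rfl)⟩]

lemma signedSwap_mem_W0D_of_eq_rootReflection {α : Fin 4 → ℚ} (hα : α ∈ Phi0D 4 (le_refl 4))
    {g : Label} (hg : ⇑(signedSwap g) = rootReflection α) : signedSwap g ∈ W0D 4 (le_refl 4) :=
  Subgroup.subset_closure ⟨α, hα, fun x => congrFun hg x⟩

lemma signedSwap_mem_W0D (g : Label) : signedSwap g ∈ W0D 4 (le_refl 4) := by
  have h₀ : signedSwap 0 ∈ W0D 4 (le_refl 4) := signedSwap_zero ▸ one_mem _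
  have h₁ : signedSwap (1, 0, 0) ∈ W0D 4 (le_refl 4) :=
    signedSwap_mem_W0D_of_eq_rootReflection
      ⟨⟨0, 1, by decide, Or.inr (Or.inl rfl)⟩, by simp [ip_deltaD, ev]⟩
      signedSwap_eq_rootReflection_sub_zero_one
  have h₂ : signedSwap (0, 1, 0) ∈ W0D 4 (le_refl 4) :=
    signedSwap_mem_W0D_of_eq_rootReflection
      ⟨⟨2, 3, by decide, Or.inr (Or.inl rfl)⟩, by simp [ip_deltaD, ev]⟩
      signedSwap_eq_rootReflection_sub_two_three
  have h₃ : signedSwap (0, 1, 1) ∈ W0D 4 (le_refl 4) :=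
    signedSwap_mem_W0D_of_eq_rootReflection
      ⟨⟨2, 3, by decide, Or.inl rfl⟩, by simp [ip_deltaD, ev]⟩
      signedSwap_eq_rootReflection_add_two_three
  obtain ⟨a, b, c⟩ := g
  rw [show ((a, b, c) : Label) = (a, 0, 0) + (0, b, 0) + (0, 0, c) by simp, signedSwap_add,
    signedSwap_add]
  refine mul_mem (mul_mem ?_ ?_) ?_
  · fin_cases a
    exacts [h₀, h₁]
  · fin_cases b
    exacts [h₀, h₂]
  · fin_cases c
    · exact h₀
    · show signedSwap (0, 0, 1) ∈ _
      rw [show ((0, 0, 1) : Label) = (0, 1, 0) + (0, 1, 1) by decide, signedSwap_add]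
      exact mul_mem h₂ h₃

lemma mem_W0D_four_iff {w : (Fin 4 → ℚ) ≃ₗ[ℚ] (Fin 4 → ℚ)} :
    w ∈ W0D 4 (le_refl 4) ↔ ∃ g, signedSwap g = w := by
  refine ⟨fun hw => ?_, fun ⟨g, hg⟩ => hg ▸ signedSwap_mem_W0D g⟩
  induction hw using Subgroup.closure_induction with
  | mem w hw =>
    obtain ⟨α, hα, hw⟩ := hw
    obtain ⟨g, hg⟩ := exists_signedSwap_eq_rootReflection hα
    exact ⟨g, LinearEquiv.ext fun x => (congrFun hg x).trans (hw x).symm⟩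
  | one => exact ⟨0, signedSwap_zero⟩
  | mul u v _ _ hu hv =>
    obtain ⟨⟨g, rfl⟩, ⟨h, rfl⟩⟩ := And.intro hu hv
    exact ⟨g + h, signedSwap_add g h⟩
  | inv u _ hu =>
    obtain ⟨g, rfl⟩ := hu
    refine ⟨g, (inv_eq_of_mul_eq_one_right ?_).symm⟩
    rw [← signedSwap_add, CharTwo.add_self_eq_zero, signedSwap_zero]

lemma ip_phi1Root_eq_zero_iff (x y : Label) :
    ip (phi1Root x) (phi1Root y) = 0 ↔ x + y ∈ orthogonalSums := by
  have hx : phi1Root x = signedSwap x (phi1Root 0) := by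
    rw [signedSwap_apply_phi1Root, zero_add]
  have hy : phi1Root y = signedSwap x (phi1Root (x + y)) := by
    rw [signedSwap_apply_phi1Root, add_comm x y, add_assoc, CharTwo.add_self_eq_zero, add_zero]
  rw [hx, hy, ip_signedSwap]
  generalize x + y = z
  fin_cases z <;> simp +decide [phi1Root, ip_four, ev]

lemma mem_OrthPairsD_four_iff {S : Set (Fin 4 → ℚ)} :
    S ∈ OrthPairsD 4 (le_refl 4) ↔
      ∃ x y, x + y ∈ orthogonalSums ∧ S = {phi1Root x, phi1Root y} := by
  constructor
  · rintro ⟨hS, hcard, horth⟩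
    obtain ⟨α, β, hne, rfl⟩ := Set.ncard_eq_two.mp hcard
    obtain ⟨x, rfl⟩ := mem_Phi1D_four_iff.mp (hS (Set.mem_insert _ _))
    obtain ⟨y, rfl⟩ := mem_Phi1D_four_iff.mp (hS (Set.mem_insert_of_mem _ rfl))
    exact ⟨x, y, (ip_phi1Root_eq_zero_iff x y).mp (horth _ (by simp) _ (by simp) hne), rfl⟩
  · rintro ⟨x, y, hxy, rfl⟩
    have horth := (ip_phi1Root_eq_zero_iff x y).mpr hxy
    have hne : phi1Root x ≠ phi1Root y := by
      refine phi1Root_injective.ne fun h => ?_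
      rw [h, CharTwo.add_self_eq_zero] at hxy
      revert hxy
      decide
    refine ⟨?_, Set.ncard_pair hne, ?_⟩
    · rintro _ (rfl | rfl) <;> exact mem_Phi1D_four_iff.mpr ⟨_, rfl⟩
    · rintro _ (rfl | rfl) _ (rfl | rfl) h
      exacts [absurd rfl h, horth, ip_comm _ _ ▸ horth, absurd rfl h]

lemma sameW0OrbitD_phi1Root_pair_iff (x y x' y' : Label) :
    SameW0OrbitD 4 (le_refl 4) {phi1Root x, phi1Root y} {phi1Root x', phi1Root y'} ↔
      x + y = x' + y' := by
  simp only [SameW0OrbitD, mem_W0D_four_iff, exists_exists_eq_and, Set.image_pair,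
    signedSwap_apply_phi1Root, Set.pair_eq_pair_iff, phi1Root_injective.eq_iff]
  constructor
  · rintro ⟨g, ⟨rfl, rfl⟩ | ⟨rfl, rfl⟩⟩
    · rw [add_add_add_comm, CharTwo.add_self_eq_zero, add_zero]
    · rw [add_add_add_comm, CharTwo.add_self_eq_zero, add_zero, add_comm]
  · intro h
    refine ⟨x + x', Or.inl ⟨?_, ?_⟩⟩
    · rw [← add_assoc, CharTwo.add_self_eq_zero, zero_add]
    · rw [← add_assoc, add_comm y, h, add_comm x', add_assoc, CharTwo.add_self_eq_zero, add_zero]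

/-- For `D₄`, the action of `W₀` on 2-element orthogonal subsets of `Φ₁`
has exactly three orbits: there are three pairwise non-equivalent such subsets, and
every such subset is equivalent to one of them. -/
theorem W0_three_orbits_on_orthogonal_pairs_D4 :
    ∃ A B C : Set (Fin 4 → ℚ),
      A ∈ OrthPairsD 4 (le_refl 4) ∧ B ∈ OrthPairsD 4 (le_refl 4) ∧
      C ∈ OrthPairsD 4 (le_refl 4) ∧
      ¬ SameW0OrbitD 4 (le_refl 4) A B ∧
      ¬ SameW0OrbitD 4 (le_refl 4) A C ∧
      ¬ SameW0OrbitD 4 (le_refl 4) B C ∧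
      ∀ S ∈ OrthPairsD 4 (le_refl 4),
        SameW0OrbitD 4 (le_refl 4) A S ∨ SameW0OrbitD 4 (le_refl 4) B S ∨
          SameW0OrbitD 4 (le_refl 4) C S := by
  refine ⟨{phi1Root 0, phi1Root (0, 0, 1)}, {phi1Root 0, phi1Root (1, 1, 0)},
    {phi1Root 0, phi1Root (1, 1, 1)}, ?_, ?_, ?_, ?_, ?_, ?_, ?_⟩
  iterate 3 exact mem_OrthPairsD_four_iff.mpr ⟨0, _, by decide, rfl⟩
  iterate 3 exact (sameW0OrbitD_phi1Root_pair_iff _ _ _ _).not.mpr (by decide)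
  intro S hS
  obtain ⟨x, y, hxy, rfl⟩ := mem_OrthPairsD_four_iff.mp hS
  simp only [sameW0OrbitD_phi1Root_pair_iff, zero_add]
  simpa [orthogonalSums, eq_comm] using hxy
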